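/- Fix natural numbers n, a, b with 1 ≤ a < b < n. Suppose that none of the following six equations holds: b = n − a, 2b = n + a, 2b = n + 2a, 2b = n, b = 2a, 2a = n. Then 𝒞(n, a, b) is a combinatorial configuration: for any two distinct indices j, k ∈ ZMod n, the blocks A = {j, j + a, j + b} and B = {k, k + a, k + b} satisfy |A ∩ B| ≤ 1. -/

import Mathlib

/-!
The blocks are the translates `j + {0, a, b}`. Two distinct translates of a Sidon set meet in at
most one point, and `{0, a, b}` is a Sidon set as soon as its six pair sums `0, a, b, 2a, a + b, 2b`
are distinct. In `ZMod n` these are casts of naturals below `2n`, which coincide exactly when two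
of them are equal or differ by `n`; the excluded equations are precisely these coincidences.
-/

open Pointwise

def IsSidon {G : Type*} [Add G] (S : Set G) : Prop :=
  ∀ a ∈ S, ∀ b ∈ S, ∀ c ∈ S, ∀ d ∈ S, a + b = c + d → a = c ∧ b = d ∨ a = d ∧ b = c

theorem IsSidon.card_inter_vadd_finset_le_one {G : Type*} [AddCommGroup G] [DecidableEq G]
    {S : Finset G} (hS : IsSidon (S : Set G)) {j k : G} (hjk : j ≠ k) :
    ((j +ᵥ S) ∩ (k +ᵥ S)).card ≤ 1 := by
  rw [Finset.card_le_one]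
  simp only [Finset.mem_inter, Finset.mem_vadd_finset, vadd_eq_add]
  rintro _ ⟨⟨s, hs, rfl⟩, ⟨s', hs', hx⟩⟩ _ ⟨⟨t, ht, rfl⟩, ⟨t', ht', hy⟩⟩
  rcases hS s hs t' ht' s' hs' t ht (by grind) with ⟨rfl, rfl⟩ | ⟨rfl, rfl⟩
  · exact absurd (add_right_cancel hx).symm hjk
  · rfl

theorem isSidon_zero_triple {G : Type*} [AddCommGroup G] {a b : G}
    (h : [0, a, b, a + a, a + b, b + b].Nodup) : IsSidon ({0, a, b} : Set G) := by
  simp only [List.nodup_cons, List.mem_cons, List.not_mem_nil, or_false, not_or,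
    List.nodup_nil] at h
  simp only [IsSidon, Set.mem_insert_iff, Set.mem_singleton_iff]
  rintro x (rfl | rfl | rfl) y (rfl | rfl | rfl) z (rfl | rfl | rfl) w (rfl | rfl | rfl) hsum <;>
    grind

theorem ZMod.natCast_eq_natCast_iff_of_lt_two_mul {n u v : ℕ} (hu : u < 2 * n) (hv : v < 2 * n) :
    (u : ZMod n) = v ↔ u = v ∨ u = v + n ∨ v = u + n := by
  have hn : 0 < n := by omega
  rw [ZMod.natCast_eq_natCast_iff']
  have hu' : u / n < 2 := Nat.div_lt_of_lt_mul (by rwa [mul_comm])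
  have hv' : v / n < 2 := Nat.div_lt_of_lt_mul (by rwa [mul_comm])
  have := Nat.div_add_mod u n
  have := Nat.div_add_mod v n
  have := Nat.mod_lt u hn
  have := Nat.mod_lt v hn
  interval_cases u / n <;> interval_cases v / n <;> omega

/-- If `1 ≤ a < b < n` and none of the six degeneracy equations
`a + b = n`, `2b = n + a`, `2b = n + 2a`, `2b = n`, `b = 2a`, `2a = n` holds, then
`𝒞(n, a, b)` is a combinatorial configuration: any two distinct blocks
`{j, j+a, j+b}` and `{k, k+a, k+b}` of `ZMod n` meet in at most one point. -/
theorem generalizedCyclic_is_configuration (n a b : ℕ)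
    (ha : 1 ≤ a) (hab : a < b) (hbn : b < n)
    (h1 : a + b ≠ n) (h2 : 2 * b ≠ n + a) (h3 : 2 * b ≠ n + 2 * a)
    (h4 : 2 * b ≠ n) (h5 : b ≠ 2 * a) (h6 : 2 * a ≠ n) :
    ∀ j k : ZMod n, j ≠ k →
      (({j, j + (a : ZMod n), j + (b : ZMod n)} : Finset (ZMod n)) ∩
        ({k, k + (a : ZMod n), k + (b : ZMod n)} : Finset (ZMod n))).card ≤ 1 := by
  intro j k hjk
  have hsums : ([0, a, b, a + a, a + b, b + b].map (Nat.cast : ℕ → ZMod n)).Nodup := by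
    refine List.Nodup.map_on ?_ ?_
    · simp only [List.mem_cons, List.not_mem_nil, or_false]
      intro u hu v hv huv
      have hcong := (ZMod.natCast_eq_natCast_iff_of_lt_two_mul (by omega) (by omega)).1 huv
      omega
    · simp only [List.nodup_cons, List.mem_cons, List.not_mem_nil, or_false, not_or,
        Nat.left_eq_add, Nat.right_eq_add, Nat.add_left_cancel_iff, Nat.add_right_cancel_iff,
        not_false_eq_true, List.nodup_nil, and_self, and_true]
      omega
  have hS : IsSidon ({0, (a : ZMod n), (b : ZMod n)} : Set (ZMod n)) :=
    isSidon_zero_triple (by simpa only [List.map_cons, List.map_nil, Nat.cast_zero, Nat.cast_add]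
      using hsums)
  simpa only [Finset.vadd_finset_insert, Finset.vadd_finset_singleton, vadd_eq_add, add_zero]
    using IsSidon.card_inter_vadd_finset_le_one (S := {0, (a : ZMod n), (b : ZMod n)})
      (by rwa [Finset.coe_insert, Finset.coe_pair]) hjk
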